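/- For any series–parallel term s and poset with boxes P: P satisfies the formula φ(s) under the isomorphism semantics iff P ≅ ⟦s⟧; under the upward semantics iff P ⊒ ⟦s⟧; and under the downward semantics iff P ⊑ ⟦s⟧; where φ(a)=a, φ(1)=I, φ([t])=[φ(t)], φ(t·u)=φ(t)▷φ(u), φ(t∥u)=φ(t)∗φ(u). -/

import Mathlib

/-- A poset with boxes over an alphabet `A`. -/
structure PB (A : Type) : Type 1 where
  Ev : Type
  le : Ev → Ev → Prop
  le_refl : ∀ e, le e e
  le_trans : ∀ e f g, le e f → le f g → le e g
  le_antisymm : ∀ e f, le e f → le f e → e = f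
  lab : Ev → A
  boxes : Set (Set Ev)
  boxes_ne : ∀ B ∈ boxes, B.Nonempty

/-- A homomorphism of posets with boxes: a bijection preserving labels,
order and boxes. -/
structure Hom {A : Type} (P Q : PB A) where
  toFun : P.Ev → Q.Ev
  bij : Function.Bijective toFun
  lab_eq : ∀ e, Q.lab (toFun e) = P.lab e
  mono : ∀ e f, P.le e f → Q.le (toFun e) (toFun f)
  box_pres : ∀ B ∈ P.boxes, toFun '' B ∈ Q.boxes

/-- Order-reflecting homomorphism. -/
def Hom.OrdRefl {A : Type} {P Q : PB A} (φ : Hom P Q) : Prop :=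
  ∀ e f, Q.le (φ.toFun e) (φ.toFun f) → P.le e f

/-- Box-reflecting homomorphism. -/
def Hom.BoxRefl {A : Type} {P Q : PB A} (φ : Hom P Q) : Prop :=
  ∀ B : Set P.Ev, φ.toFun '' B ∈ Q.boxes → B ∈ P.boxes

/-- Isomorphism of posets with boxes. -/
def Iso {A : Type} (P Q : PB A) : Prop :=
  ∃ φ : Hom P Q, φ.OrdRefl ∧ φ.BoxRefl

/-- `Subsume P Q` means `P ⊑ Q` : there is a homomorphism from `Q` to `P`. -/
def Subsume {A : Type} (P Q : PB A) : Prop := Nonempty (Hom Q P)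

/-- The empty poset with boxes. -/
def onePB (A : Type) : PB A where
  Ev := PEmpty
  le := fun _ _ => True
  le_refl := fun e => trivial
  le_trans := fun _ _ _ _ _ => trivial
  le_antisymm := fun e => e.elim
  lab := fun e => e.elim
  boxes := ∅
  boxes_ne := fun _ h => absurd h (Set.notMem_empty _)

/-- The atomic poset with boxes, with a single event labelled `a`. -/
def atomPB {A : Type} (a : A) : PB A where
  Ev := PUnit
  le := fun _ _ => True
  le_refl := fun _ => trivial
  le_trans := fun _ _ _ _ _ => trivial
  le_antisymm := fun _ _ _ _ => rfl
  lab := fun _ => a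
  boxes := ∅
  boxes_ne := fun _ h => absurd h (Set.notMem_empty _)

/-- The order of a sequential composition on the disjoint union of events. -/
def seqLE {A : Type} (P Q : PB A) : P.Ev ⊕ Q.Ev → P.Ev ⊕ Q.Ev → Prop
  | .inl a, .inl b => P.le a b
  | .inr a, .inr b => Q.le a b
  | .inl _, .inr _ => True
  | .inr _, .inl _ => False

/-- Sequential composition of posets with boxes. -/
def seqPB {A : Type} (P Q : PB A) : PB A where
  Ev := P.Ev ⊕ Q.Ev
  le := seqLE P Q
  le_refl := fun e => by cases e <;> simp [seqLE, PB.le_refl]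
  le_trans := fun e f g hef hfg => by
    cases e <;> cases f <;> cases g <;>
      simp_all [seqLE] <;>
      first
        | exact P.le_trans _ _ _ hef hfg
        | exact Q.le_trans _ _ _ hef hfg
  le_antisymm := fun e f hef hfe => by
    cases e <;> cases f <;> simp_all [seqLE]
    · exact P.le_antisymm _ _ hef hfe
    · exact Q.le_antisymm _ _ hef hfe
  lab := Sum.elim P.lab Q.lab
  boxes := (Set.image Sum.inl '' P.boxes) ∪ (Set.image Sum.inr '' Q.boxes)
  boxes_ne := by
    rintro B (⟨C, hC, rfl⟩ | ⟨C, hC, rfl⟩)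
    · exact ((P.boxes_ne C hC).image _)
    · exact ((Q.boxes_ne C hC).image _)

/-- The order of a parallel composition on the disjoint union of events. -/
def parLE {A : Type} (P Q : PB A) : P.Ev ⊕ Q.Ev → P.Ev ⊕ Q.Ev → Prop
  | .inl a, .inl b => P.le a b
  | .inr a, .inr b => Q.le a b
  | .inl _, .inr _ => False
  | .inr _, .inl _ => False

/-- Parallel composition of posets with boxes. -/
def parPB {A : Type} (P Q : PB A) : PB A where
  Ev := P.Ev ⊕ Q.Ev
  le := parLE P Q
  le_refl := fun e => by cases e <;> simp [parLE, PB.le_refl]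
  le_trans := fun e f g hef hfg => by
    cases e <;> cases f <;> cases g <;>
      simp_all [parLE] <;>
      first
        | exact P.le_trans _ _ _ hef hfg
        | exact Q.le_trans _ _ _ hef hfg
  le_antisymm := fun e f hef hfe => by
    cases e <;> cases f <;> simp_all [parLE]
    · exact P.le_antisymm _ _ hef hfe
    · exact Q.le_antisymm _ _ hef hfe
  lab := Sum.elim P.lab Q.lab
  boxes := (Set.image Sum.inl '' P.boxes) ∪ (Set.image Sum.inr '' Q.boxes)
  boxes_ne := by
    rintro B (⟨C, hC, rfl⟩ | ⟨C, hC, rfl⟩)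
    · exact ((P.boxes_ne C hC).image _)
    · exact ((Q.boxes_ne C hC).image _)

/-- Boxing: add the full (nonempty) set of events as a box. -/
def boxPB {A : Type} (P : PB A) : PB A where
  Ev := P.Ev
  le := P.le
  le_refl := P.le_refl
  le_trans := P.le_trans
  le_antisymm := P.le_antisymm
  lab := P.lab
  boxes := P.boxes ∪ {B | B = Set.univ ∧ B.Nonempty}
  boxes_ne := by
    rintro B (hB | ⟨rfl, hne⟩)
    · exact P.boxes_ne B hB
    · exact hne

/-- Restriction of a poset with boxes to a subset of its events. -/
def restrictPB {A : Type} (P : PB A) (S : Set P.Ev) : PB A where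
  Ev := S
  le := fun x y => P.le x.1 y.1
  le_refl := fun x => P.le_refl x.1
  le_trans := fun x y z => P.le_trans x.1 y.1 z.1
  le_antisymm := fun x y h h' => Subtype.ext (P.le_antisymm _ _ h h')
  lab := fun x => P.lab x.1
  boxes := {B | Subtype.val '' B ∈ P.boxes}
  boxes_ne := fun B hB => by
    rcases P.boxes_ne _ hB with ⟨x, ⟨y, hy, rfl⟩⟩
    exact ⟨y, hy⟩

/-- Forbidden pattern P1 (the `N` pattern). -/
def hasP1 {A : Type} (P : PB A) : Prop :=
  ∃ e1 e2 e3 e4 : P.Ev,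
    P.le e1 e3 ∧ P.le e2 e3 ∧ P.le e2 e4 ∧
    ¬ P.le e1 e4 ∧ ¬ P.le e2 e1 ∧ ¬ P.le e4 e3

/-- Forbidden pattern P2 (overlapping non-nested boxes). -/
def hasP2 {A : Type} (P : PB A) : Prop :=
  ∃ (Bx Cx : Set P.Ev) (e1 e2 e3 : P.Ev),
    Bx ∈ P.boxes ∧ Cx ∈ P.boxes ∧
    e1 ∈ Bx \ Cx ∧ e2 ∈ Bx ∩ Cx ∧ e3 ∈ Cx \ Bx

/-- Forbidden pattern P3. -/
def hasP3 {A : Type} (P : PB A) : Prop :=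
  ∃ (Bx : Set P.Ev) (e1 e2 e3 : P.Ev),
    Bx ∈ P.boxes ∧ e1 ∉ Bx ∧ e2 ∈ Bx ∧ e3 ∈ Bx ∧
    P.le e1 e2 ∧ ¬ P.le e1 e3

/-- Forbidden pattern P4. -/
def hasP4 {A : Type} (P : PB A) : Prop :=
  ∃ (Bx : Set P.Ev) (e1 e2 e3 : P.Ev),
    Bx ∈ P.boxes ∧ e1 ∉ Bx ∧ e2 ∈ Bx ∧ e3 ∈ Bx ∧
    P.le e2 e1 ∧ ¬ P.le e3 e1

/-- A set of events is non-trivial if it is neither empty nor everything. -/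
def NonTrivial {A : Type} (P : PB A) (S : Set P.Ev) : Prop :=
  S ≠ ∅ ∧ S ≠ Set.univ

/-- A set of events is nested if every box is contained in it or disjoint from it. -/
def Nested {A : Type} (P : PB A) (S : Set P.Ev) : Prop :=
  ∀ B ∈ P.boxes, B ⊆ S ∨ B ∩ S = ∅

/-- A set of events is prefix if every event in it is below every event outside. -/
def IsPrefix {A : Type} (P : PB A) (S : Set P.Ev) : Prop :=
  ∀ e ∈ S, ∀ f ∉ S, P.le e f

/-- A set of events is isolated if its events are incomparable with outside events. -/
def Isolated {A : Type} (P : PB A) (S : Set P.Ev) : Prop :=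
  ∀ e ∈ S, ∀ f ∉ S, ¬ P.le e f ∧ ¬ P.le f e
/-- Series–parallel terms. -/
inductive Term (A : Type) : Type
  | one : Term A
  | atom (a : A) : Term A
  | seq (s t : Term A) : Term A
  | par (s t : Term A) : Term A
  | box (s : Term A) : Term A

/-- Interpretation of terms as posets with boxes. -/
def semT {A : Type} : Term A → PB A
  | .one => onePB A
  | .atom a => atomPB a
  | .seq s t => seqPB (semT s) (semT t)
  | .par s t => parPB (semT s) (semT t)
  | .box s => boxPB (semT s)

/-- Derivability in the equational theory of bimonoids with boxes. -/
inductive BimEq {A : Type} : Term A → Term A → Prop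
  | seq_assoc (s t u : Term A) : BimEq (.seq s (.seq t u)) (.seq (.seq s t) u)
  | par_assoc (s t u : Term A) : BimEq (.par s (.par t u)) (.par (.par s t) u)
  | par_comm (s t : Term A) : BimEq (.par s t) (.par t s)
  | seq_unit_l (s : Term A) : BimEq (.seq .one s) s
  | seq_unit_r (s : Term A) : BimEq (.seq s .one) s
  | par_unit (s : Term A) : BimEq (.par .one s) s
  | box_box (s : Term A) : BimEq (.box (.box s)) (.box s)
  | box_one : BimEq (.box .one) .one
  | refl (s : Term A) : BimEq s s
  | symm {s t : Term A} : BimEq s t → BimEq t s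
  | trans {s t u : Term A} : BimEq s t → BimEq t u → BimEq s u
  | seq_congr {s s' t t' : Term A} : BimEq s s' → BimEq t t' → BimEq (.seq s t) (.seq s' t')
  | par_congr {s s' t t' : Term A} : BimEq s s' → BimEq t t' → BimEq (.par s t) (.par s' t')
  | box_congr {s s' : Term A} : BimEq s s' → BimEq (.box s) (.box s')

/-- Derivability in the inequational theory of concurrent monoids with boxes:
bimonoid axioms (in both directions) together with exchange and box elimination. -/
inductive CMLe {A : Type} : Term A → Term A → Prop
  | of_eq {s t : Term A} : BimEq s t → CMLe s t
  | exchange (s t u v : Term A) :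
      CMLe (.seq (.par s t) (.par u v)) (.par (.seq s u) (.seq t v))
  | box_le (s : Term A) : CMLe (.box s) s
  | refl (s : Term A) : CMLe s s
  | trans {s t u : Term A} : CMLe s t → CMLe t u → CMLe s u
  | seq_congr {s s' t t' : Term A} : CMLe s s' → CMLe t t' → CMLe (.seq s t) (.seq s' t')
  | par_congr {s s' t t' : Term A} : CMLe s s' → CMLe t t' → CMLe (.par s t) (.par s' t')
  | box_congr {s s' : Term A} : CMLe s s' → CMLe (.box s) (.box s')
/-- Formulas of pomset logic. -/
inductive Formula (A : Type) : Type
  | emp : Formula A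
  | atom (a : A) : Formula A
  | or (φ ψ : Formula A) : Formula A
  | and (φ ψ : Formula A) : Formula A
  | seqF (φ ψ : Formula A) : Formula A
  | parF (φ ψ : Formula A) : Formula A
  | boxF (φ : Formula A) : Formula A
  | dia (φ : Formula A) : Formula A
  | neg (φ : Formula A) : Formula A

/-- `Q` is a sub-poset of `P` : it is isomorphic to a restriction of `P`. -/
def SubPoset {A : Type} (Q P : PB A) : Prop :=
  ∃ S : Set P.Ev, Iso Q (restrictPB P S)

/-- Satisfaction relation, parametrized by a relation `R` on posets with boxes. -/
def sat {A : Type} (R : PB A → PB A → Prop) : Formula A → PB A → Prop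
  | .emp, P => R P (onePB A)
  | .atom a, P => R P (atomPB a)
  | .or φ ψ, P => sat R φ P ∨ sat R ψ P
  | .and φ ψ, P => sat R φ P ∧ sat R ψ P
  | .seqF φ ψ, P => ∃ P1 P2, R P (seqPB P1 P2) ∧ sat R φ P1 ∧ sat R ψ P2
  | .parF φ ψ, P => ∃ P1 P2, R P (parPB P1 P2) ∧ sat R φ P1 ∧ sat R ψ P2
  | .boxF φ, P => ∃ Q, R P (boxPB Q) ∧ sat R φ Q
  | .dia φ, P => ∃ P' Q, R P P' ∧ SubPoset Q P' ∧ sat R φ Q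
  | .neg φ, P => ¬ sat R φ P

/-- The formula associated with a series–parallel term. -/
def formOf {A : Type} : Term A → Formula A
  | .one => .emp
  | .atom a => .atom a
  | .seq s t => .seqF (formOf s) (formOf t)
  | .par s t => .parF (formOf s) (formOf t)
  | .box s => .boxF (formOf s)

/-! `sat R (formOf s) P` unfolds to "`P` is `R`-related to a composite of posets satisfying the
subformulas".  For any preorder `R` compatible with the three constructions, induction on `s`
collapses this existential: the semantics of the subterms are witnesses by reflexivity, and
conversely transitivity and compatibility carry `R` from the witnesses to `semT s`.  Isomorphism,
subsumption and its converse are such preorders. -/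

section SumBoxes

variable {α β γ δ : Type*}

/-- The boxes of both `seqPB` and `parPB`. -/
def sumBoxes (X : Set (Set α)) (Y : Set (Set β)) : Set (Set (α ⊕ β)) :=
  Set.image Sum.inl '' X ∪ Set.image Sum.inr '' Y

theorem sumMap_image_mem_sumBoxes {f : α → γ} {g : β → δ} {X : Set (Set α)} {Y : Set (Set β)}
    {X' : Set (Set γ)} {Y' : Set (Set δ)} (hf : ∀ C ∈ X, f '' C ∈ X') (hg : ∀ C ∈ Y, g '' C ∈ Y')
    {B : Set (α ⊕ β)} (hB : B ∈ sumBoxes X Y) : Sum.map f g '' B ∈ sumBoxes X' Y' := by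
  rcases hB with ⟨C, hC, rfl⟩ | ⟨C, hC, rfl⟩
  · exact Or.inl ⟨f '' C, hf C hC, by simp only [Set.image_image, Sum.map_inl]⟩
  · exact Or.inr ⟨g '' C, hg C hC, by simp only [Set.image_image, Sum.map_inr]⟩

theorem eq_image_inl_of_sumMap_image_eq {f : α → γ} {g : β → δ} {B : Set (α ⊕ β)} {C : Set γ}
    (h : Sum.map f g '' B = Sum.inl '' C) : ∃ D, B = Sum.inl '' D ∧ f '' D = C := by
  have hB : B ⊆ Set.range Sum.inl := by
    rintro (a | b) hb
    · exact ⟨a, rfl⟩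
    · obtain ⟨c, -, hc⟩ : Sum.inr (g b) ∈ Sum.inl '' C := h ▸ Set.mem_image_of_mem _ hb
      exact (Sum.inl_ne_inr hc).elim
  have hBD : B = Sum.inl '' (Sum.inl ⁻¹' B) := (Set.image_preimage_eq_of_subset hB).symm
  refine ⟨_, hBD, (Sum.inl_injective (β := δ)).image_injective ?_⟩
  calc Sum.inl '' (f '' (Sum.inl ⁻¹' B))
      = Sum.map f g '' (Sum.inl '' (Sum.inl ⁻¹' B)) := by
        simp only [Set.image_image, Sum.map_inl]
    _ = Sum.inl '' C := by rw [← hBD, h]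

theorem eq_image_inr_of_sumMap_image_eq {f : α → γ} {g : β → δ} {B : Set (α ⊕ β)} {C : Set δ}
    (h : Sum.map f g '' B = Sum.inr '' C) : ∃ D, B = Sum.inr '' D ∧ g '' D = C := by
  have hB : B ⊆ Set.range Sum.inr := by
    rintro (a | b) hb
    · obtain ⟨c, -, hc⟩ : Sum.inl (f a) ∈ Sum.inr '' C := h ▸ Set.mem_image_of_mem _ hb
      exact (Sum.inr_ne_inl hc).elim
    · exact ⟨b, rfl⟩
  have hBD : B = Sum.inr '' (Sum.inr ⁻¹' B) := (Set.image_preimage_eq_of_subset hB).symm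
  refine ⟨_, hBD, (Sum.inr_injective (α := γ)).image_injective ?_⟩
  calc Sum.inr '' (g '' (Sum.inr ⁻¹' B))
      = Sum.map f g '' (Sum.inr '' (Sum.inr ⁻¹' B)) := by
        simp only [Set.image_image, Sum.map_inr]
    _ = Sum.inr '' C := by rw [← hBD, h]

theorem mem_sumBoxes_of_sumMap_image_mem {f : α → γ} {g : β → δ} {X : Set (Set α)}
    {Y : Set (Set β)} {X' : Set (Set γ)} {Y' : Set (Set δ)} (hf : ∀ C, f '' C ∈ X' → C ∈ X)
    (hg : ∀ C, g '' C ∈ Y' → C ∈ Y) {B : Set (α ⊕ β)} (hB : Sum.map f g '' B ∈ sumBoxes X' Y') :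
    B ∈ sumBoxes X Y := by
  rcases hB with ⟨C, hC, hBC⟩ | ⟨C, hC, hBC⟩
  · obtain ⟨D, rfl, rfl⟩ := eq_image_inl_of_sumMap_image_eq hBC.symm
    exact Or.inl ⟨D, hf D hC, rfl⟩
  · obtain ⟨D, rfl, rfl⟩ := eq_image_inr_of_sumMap_image_eq hBC.symm
    exact Or.inr ⟨D, hg D hC, rfl⟩

end SumBoxes

namespace Hom

variable {A : Type} {P P' Q Q' R : PB A}

protected def id (P : PB A) : Hom P P where
  toFun := id
  bij := Function.bijective_id
  lab_eq _ := rfl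
  mono _ _ h := h
  box_pres B hB := by rwa [Set.image_id]

def comp (ψ : Hom Q R) (φ : Hom P Q) : Hom P R where
  toFun := ψ.toFun ∘ φ.toFun
  bij := ψ.bij.comp φ.bij
  lab_eq e := (ψ.lab_eq _).trans (φ.lab_eq e)
  mono e f h := ψ.mono _ _ (φ.mono e f h)
  box_pres B hB := by
    rw [Set.image_comp]
    exact ψ.box_pres _ (φ.box_pres B hB)

def seq (φ : Hom P P') (ψ : Hom Q Q') : Hom (seqPB P Q) (seqPB P' Q') where
  toFun := Sum.map φ.toFun ψ.toFun
  bij := ⟨φ.bij.1.sumMap ψ.bij.1, φ.bij.2.sumMap ψ.bij.2⟩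
  lab_eq e := by cases e <;> simp [seqPB, φ.lab_eq, ψ.lab_eq]
  mono e f h := by
    cases e <;> cases f
    · exact φ.mono _ _ h
    · trivial
    · exact h.elim
    · exact ψ.mono _ _ h
  box_pres _ := sumMap_image_mem_sumBoxes φ.box_pres ψ.box_pres

def par (φ : Hom P P') (ψ : Hom Q Q') : Hom (parPB P Q) (parPB P' Q') where
  toFun := Sum.map φ.toFun ψ.toFun
  bij := ⟨φ.bij.1.sumMap ψ.bij.1, φ.bij.2.sumMap ψ.bij.2⟩
  lab_eq e := by cases e <;> simp [parPB, φ.lab_eq, ψ.lab_eq]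
  mono e f h := by
    cases e <;> cases f
    · exact φ.mono _ _ h
    · exact h.elim
    · exact h.elim
    · exact ψ.mono _ _ h
  box_pres _ := sumMap_image_mem_sumBoxes φ.box_pres ψ.box_pres

theorem image_univ (φ : Hom P Q) : φ.toFun '' Set.univ = Set.univ :=
  Set.image_univ_of_surjective φ.bij.2

def box (φ : Hom P P') : Hom (boxPB P) (boxPB P') where
  toFun := φ.toFun
  bij := φ.bij
  lab_eq := φ.lab_eq
  mono := φ.mono
  box_pres B hB := by
    rcases hB with hB | ⟨rfl, hne⟩
    · exact Or.inl (φ.box_pres B hB)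
    · exact Or.inr ⟨φ.image_univ, hne.image _⟩

theorem OrdRefl.comp {ψ : Hom Q R} {φ : Hom P Q} (hψ : ψ.OrdRefl) (hφ : φ.OrdRefl) :
    (ψ.comp φ).OrdRefl :=
  fun e f h => hφ e f (hψ _ _ h)

theorem BoxRefl.comp {ψ : Hom Q R} {φ : Hom P Q} (hψ : ψ.BoxRefl) (hφ : φ.BoxRefl) :
    (ψ.comp φ).BoxRefl := by
  intro B hB
  rw [Hom.comp, Set.image_comp] at hB
  exact hφ B (hψ _ hB)

theorem OrdRefl.seq {φ : Hom P P'} {ψ : Hom Q Q'} (hφ : φ.OrdRefl) (hψ : ψ.OrdRefl) :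
    (φ.seq ψ).OrdRefl := by
  rintro (e | e) (f | f) h
  · exact hφ _ _ h
  · trivial
  · exact h.elim
  · exact hψ _ _ h

theorem OrdRefl.par {φ : Hom P P'} {ψ : Hom Q Q'} (hφ : φ.OrdRefl) (hψ : ψ.OrdRefl) :
    (φ.par ψ).OrdRefl := by
  rintro (e | e) (f | f) h
  · exact hφ _ _ h
  · exact h.elim
  · exact h.elim
  · exact hψ _ _ h

theorem BoxRefl.seq {φ : Hom P P'} {ψ : Hom Q Q'} (hφ : φ.BoxRefl) (hψ : ψ.BoxRefl) :
    (φ.seq ψ).BoxRefl :=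
  fun _ => mem_sumBoxes_of_sumMap_image_mem hφ hψ

theorem BoxRefl.par {φ : Hom P P'} {ψ : Hom Q Q'} (hφ : φ.BoxRefl) (hψ : ψ.BoxRefl) :
    (φ.par ψ).BoxRefl :=
  fun _ => mem_sumBoxes_of_sumMap_image_mem hφ hψ

theorem BoxRefl.box {φ : Hom P P'} (hφ : φ.BoxRefl) : φ.box.BoxRefl := by
  rintro B (hB | ⟨hB, hne⟩)
  · exact Or.inl (hφ B hB)
  · exact Or.inr ⟨φ.bij.1.image_injective (hB.trans φ.image_univ.symm), Set.image_nonempty.mp hne⟩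

end Hom
namespace Iso

variable {A : Type} {P P' Q Q' R : PB A}

protected theorem refl (P : PB A) : Iso P P :=
  ⟨Hom.id P, fun _ _ h => h, fun B hB => by rwa [Hom.id, Set.image_id] at hB⟩

protected theorem trans : Iso P Q → Iso Q R → Iso P R
  | ⟨φ, hφo, hφb⟩, ⟨ψ, hψo, hψb⟩ => ⟨ψ.comp φ, hψo.comp hφo, hψb.comp hφb⟩

theorem seq : Iso P P' → Iso Q Q' → Iso (seqPB P Q) (seqPB P' Q')
  | ⟨φ, hφo, hφb⟩, ⟨ψ, hψo, hψb⟩ => ⟨φ.seq ψ, hφo.seq hψo, hφb.seq hψb⟩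

theorem par : Iso P P' → Iso Q Q' → Iso (parPB P Q) (parPB P' Q')
  | ⟨φ, hφo, hφb⟩, ⟨ψ, hψo, hψb⟩ => ⟨φ.par ψ, hφo.par hψo, hφb.par hψb⟩

theorem box : Iso P P' → Iso (boxPB P) (boxPB P')
  | ⟨φ, hφo, hφb⟩ => ⟨φ.box, hφo, hφb.box⟩

end Iso

structure IsCongruentPreorder {A : Type} (R : PB A → PB A → Prop) : Prop where
  refl (P : PB A) : R P P
  trans {P Q S : PB A} : R P Q → R Q S → R P S
  seq {P P' Q Q' : PB A} : R P P' → R Q Q' → R (seqPB P Q) (seqPB P' Q')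
  par {P P' Q Q' : PB A} : R P P' → R Q Q' → R (parPB P Q) (parPB P' Q')
  box {P P' : PB A} : R P P' → R (boxPB P) (boxPB P')

namespace IsCongruentPreorder

variable {A : Type} {R : PB A → PB A → Prop}

theorem flip (hR : IsCongruentPreorder R) : IsCongruentPreorder (flip R) where
  refl := hR.refl
  trans h₁ h₂ := hR.trans h₂ h₁
  seq := hR.seq
  par := hR.par
  box := hR.box

theorem iso : IsCongruentPreorder (Iso : PB A → PB A → Prop) :=
  ⟨Iso.refl, Iso.trans, Iso.seq, Iso.par, Iso.box⟩

theorem subsume : IsCongruentPreorder (Subsume : PB A → PB A → Prop) where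
  refl P := ⟨Hom.id P⟩
  trans := fun ⟨φ⟩ ⟨ψ⟩ => ⟨φ.comp ψ⟩
  seq := fun ⟨φ⟩ ⟨ψ⟩ => ⟨φ.seq ψ⟩
  par := fun ⟨φ⟩ ⟨ψ⟩ => ⟨φ.par ψ⟩
  box := fun ⟨φ⟩ => ⟨φ.box⟩

theorem sat_formOf_iff (hR : IsCongruentPreorder R) (s : Term A) (P : PB A) :
    sat R (formOf s) P ↔ R P (semT s) := by
  induction s generalizing P with
  | one | atom => rfl
  | seq s t ihs iht =>
    refine ⟨fun ⟨P₁, P₂, hP, h₁, h₂⟩ => hR.trans hP (hR.seq ((ihs P₁).1 h₁) ((iht P₂).1 h₂)),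
      fun hP => ⟨semT s, semT t, hP, (ihs _).2 (hR.refl _), (iht _).2 (hR.refl _)⟩⟩
  | par s t ihs iht =>
    refine ⟨fun ⟨P₁, P₂, hP, h₁, h₂⟩ => hR.trans hP (hR.par ((ihs P₁).1 h₁) ((iht P₂).1 h₂)),
      fun hP => ⟨semT s, semT t, hP, (ihs _).2 (hR.refl _), (iht _).2 (hR.refl _)⟩⟩
  | box s ih =>
    exact ⟨fun ⟨Q, hP, hQ⟩ => hR.trans hP (hR.box ((ih Q).1 hQ)),
      fun hP => ⟨semT s, hP, (ih _).2 (hR.refl _)⟩⟩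

end IsCongruentPreorder

/-- For a series–parallel term `s` and poset with boxes `P` : `P` satisfies
`φ(s)` under the isomorphism semantics iff `P ≅ ⟦s⟧`; under the upward semantics
iff `P ⊒ ⟦s⟧`; under the downward semantics iff `P ⊑ ⟦s⟧`. -/
theorem term_to_formula (A : Type) (s : Term A) (P : PB A) :
    (sat Iso (formOf s) P ↔ Iso P (semT s)) ∧
    (sat (fun X Y => Subsume Y X) (formOf s) P ↔ Subsume (semT s) P) ∧
    (sat Subsume (formOf s) P ↔ Subsume P (semT s)) :=
  ⟨IsCongruentPreorder.iso.sat_formOf_iff s P, IsCongruentPreorder.subsume.flip.sat_formOf_iff s P,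
    IsCongruentPreorder.subsume.sat_formOf_iff s P⟩
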